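/- For every ε > 0 there exists δ > 0 such that for all a, b ∈ S^d within geodesic distance δ of the south pole (0,...,0,-1), stereographic projection from the north pole satisfies ‖π(a) - π(b)‖ ≤ (1/2 + ε)·dist(a,b). -/

import Mathlib

/-!
For unit vectors `a, b` away from the north pole, stereographic projection satisfies the exact
identity `‖π a - π b‖² = ‖a - b‖² / ((1 - a_{d+1}) (1 - b_{d+1}))`. Within angle `δ` of the south
pole, `1 - x_{d+1} = 1 + cos ∠(x, south pole) ≥ 2 - δ² / 2`, so `π` contracts chords by a factor
close to `1/2`; and a chord is never longer than the arc it subtends.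
-/

open Real InnerProductGeometry RealInnerProductSpace

/-- Stereographic projection of `S^d ⊂ ℝ^{d+1}` from the north pole `(0,…,0,1)` onto `ℝ^d`. -/
noncomputable def stereoProj (d : ℕ) (x : EuclideanSpace ℝ (Fin (d + 1))) :
    EuclideanSpace ℝ (Fin d) :=
  WithLp.toLp 2 (fun i : Fin d => x i.castSucc / (1 - x (Fin.last d)))

theorem norm_sub_le_angle_of_norm_eq_one {V : Type*} [NormedAddCommGroup V]
    [InnerProductSpace ℝ V] {x y : V} (hx : ‖x‖ = 1) (hy : ‖y‖ = 1) :
    ‖x - y‖ ≤ angle x y := by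
  have hcos : ⟪x, y⟫ = cos (angle x y) := by rw [cos_angle, hx, hy]; simp
  have hsq : ‖x - y‖ ^ 2 ≤ angle x y ^ 2 := by
    rw [norm_sub_sq_real, hx, hy, hcos]
    linarith [one_sub_sq_div_two_le_cos (x := angle x y)]
  exact (pow_le_pow_iff_left₀ (norm_nonneg _) (angle_nonneg x y) two_ne_zero).mp hsq

namespace EuclideanSpace

variable {d : ℕ}

noncomputable def init (x : EuclideanSpace ℝ (Fin (d + 1))) : EuclideanSpace ℝ (Fin d) :=
  WithLp.toLp 2 (Fin.init x.ofLp)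

theorem inner_eq_inner_init_add (x y : EuclideanSpace ℝ (Fin (d + 1))) :
    ⟪x, y⟫ = ⟪init x, init y⟫ + x (Fin.last d) * y (Fin.last d) := by
  simp [init, PiLp.inner_apply, Fin.sum_univ_castSucc, Fin.init, mul_comm]

theorem norm_sq_eq_norm_init_sq_add (x : EuclideanSpace ℝ (Fin (d + 1))) :
    ‖x‖ ^ 2 = ‖init x‖ ^ 2 + x (Fin.last d) ^ 2 := by
  rw [← real_inner_self_eq_norm_sq, ← real_inner_self_eq_norm_sq, inner_eq_inner_init_add, sq]

end EuclideanSpace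

open EuclideanSpace

theorem stereoProj_eq_smul_init {d : ℕ} (x : EuclideanSpace ℝ (Fin (d + 1))) :
    stereoProj d x = (1 - x (Fin.last d))⁻¹ • init x := by
  ext i
  simp [stereoProj, init, Fin.init, div_eq_inv_mul]

theorem norm_stereoProj_sub_sq {d : ℕ} {a b : EuclideanSpace ℝ (Fin (d + 1))}
    (ha : ‖a‖ = 1) (hb : ‖b‖ = 1) (ha' : a (Fin.last d) ≠ 1) (hb' : b (Fin.last d) ≠ 1) :
    ‖stereoProj d a - stereoProj d b‖ ^ 2
      = ‖a - b‖ ^ 2 / ((1 - a (Fin.last d)) * (1 - b (Fin.last d))) := by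
  have hA : 1 - a (Fin.last d) ≠ 0 := sub_ne_zero.mpr (Ne.symm ha')
  have hB : 1 - b (Fin.last d) ≠ 0 := sub_ne_zero.mpr (Ne.symm hb')
  have hinit_a : ‖init a‖ ^ 2 = 1 - a (Fin.last d) ^ 2 := by
    linear_combination (‖a‖ + 1) * ha - norm_sq_eq_norm_init_sq_add a
  have hinit_b : ‖init b‖ ^ 2 = 1 - b (Fin.last d) ^ 2 := by
    linear_combination (‖b‖ + 1) * hb - norm_sq_eq_norm_init_sq_add b
  rw [stereoProj_eq_smul_init, stereoProj_eq_smul_init, norm_sub_sq_real, norm_sub_sq_real,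
    norm_smul, norm_smul, inner_smul_left, inner_smul_right, ha, hb,
    inner_eq_inner_init_add a b, mul_pow, mul_pow, hinit_a, hinit_b]
  simp only [Real.norm_eq_abs, sq_abs, conj_trivial]
  field_simp
  ring

theorem two_sub_sq_div_two_le_one_sub_last {d : ℕ} {x : EuclideanSpace ℝ (Fin (d + 1))}
    {δ : ℝ} (hx : ‖x‖ = 1)
    (hδ : angle x (-(EuclideanSpace.single (Fin.last d) (1 : ℝ))) ≤ δ) :
    2 - δ ^ 2 / 2 ≤ 1 - x (Fin.last d) := by
  set θ := angle x (-(EuclideanSpace.single (Fin.last d) (1 : ℝ)))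
  have hcos : cos θ = -x (Fin.last d) := by
    simp [θ, cos_angle, hx, inner_neg_right, EuclideanSpace.inner_single_right]
  have hθ : θ ^ 2 ≤ δ ^ 2 := pow_le_pow_left₀ (angle_nonneg _ _) hδ 2
  linarith [one_sub_sq_div_two_le_cos (x := θ)]

theorem norm_stereoProj_sub_le {d : ℕ} {a b : EuclideanSpace ℝ (Fin (d + 1))} {c : ℝ}
    (hc : 0 < c) (ha : ‖a‖ = 1) (hb : ‖b‖ = 1)
    (hca : c ≤ 1 - a (Fin.last d)) (hcb : c ≤ 1 - b (Fin.last d)) :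
    ‖stereoProj d a - stereoProj d b‖ ≤ ‖a - b‖ / c := by
  have hsq : ‖stereoProj d a - stereoProj d b‖ ^ 2 ≤ (‖a - b‖ / c) ^ 2 := by
    rw [norm_stereoProj_sub_sq ha hb (by linarith) (by linarith), div_pow, sq c]
    gcongr
    linarith
  exact (pow_le_pow_iff_left₀ (norm_nonneg _) (by positivity) two_ne_zero).mp hsq

/-- For every `ε > 0` there is a `δ > 0` such that for all points `a, b ∈ S^d` within
geodesic distance `δ` of the south pole `(0,…,0,-1)`, stereographic projection from the
north pole satisfies `‖π(a) - π(b)‖ ≤ (1/2 + ε)·dist(a,b)`. -/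
theorem stereoProj_dist_upper_bound_near_south_pole (d : ℕ) (ε : ℝ) (hε : 0 < ε) :
    ∃ δ > (0 : ℝ), ∀ a b : EuclideanSpace ℝ (Fin (d + 1)),
      a ∈ Metric.sphere (0 : EuclideanSpace ℝ (Fin (d + 1))) 1 →
      b ∈ Metric.sphere (0 : EuclideanSpace ℝ (Fin (d + 1))) 1 →
      InnerProductGeometry.angle a (-(EuclideanSpace.single (Fin.last d) (1 : ℝ))) < δ →
      InnerProductGeometry.angle b (-(EuclideanSpace.single (Fin.last d) (1 : ℝ))) < δ →
      ‖stereoProj d a - stereoProj d b‖ ≤ (1 / 2 + ε) * InnerProductGeometry.angle a b := by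
  refine ⟨min ε 1, by positivity, fun a b ha hb hδa hδb => ?_⟩
  rw [mem_sphere_zero_iff_norm] at ha hb
  set δ := min ε 1
  have hδε : δ ≤ ε := min_le_left ε 1
  have hδ1 : δ ≤ 1 := min_le_right ε 1
  have hδ0 : 0 ≤ δ := by positivity
  have hc : 0 < 2 - δ ^ 2 / 2 := by nlinarith
  have hconst : 1 / (2 - δ ^ 2 / 2) ≤ 1 / 2 + ε := by
    rw [div_le_iff₀ hc]
    nlinarith [mul_le_mul hδε hδ1 hδ0 hε.le, mul_nonneg hε.le (sq_nonneg δ)]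
  calc ‖stereoProj d a - stereoProj d b‖ ≤ ‖a - b‖ / (2 - δ ^ 2 / 2) :=
        norm_stereoProj_sub_le hc ha hb (two_sub_sq_div_two_le_one_sub_last ha hδa.le)
          (two_sub_sq_div_two_le_one_sub_last hb hδb.le)
    _ = 1 / (2 - δ ^ 2 / 2) * ‖a - b‖ := by ring
    _ ≤ (1 / 2 + ε) * angle a b :=
        mul_le_mul hconst (norm_sub_le_angle_of_norm_eq_one ha hb) (norm_nonneg _) (by positivity)
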